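/- In the greedy LZ-End factorization of T = B(p)·x·A(p)·∏_{i=1}^{p²} (#_i · B(l_i) · x · A(r_i)) over the alphabet {a_1,...,a_p, b_1,...,b_p, x, #_1,...,#_{p²}} (p ≥ 2), where A(i) = a_1···a_i, B(i) = b_i···b_1, and (l_i, r_i) enumerates [1,p]² sorted by (l+r, l), the number of phrases is exactly 2p² + 2p + 1. -/

import Mathlib

/-- `fs` is the greedy LZ-End factorization of `T`: each phrase is the longest
prefix of the remaining suffix that is a suffix of `f_1⋯f_m` for some `m < k`
(a previous occurrence ending at a phrase boundary), or a single character otherwise. -/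
def IsGreedyLZEnd {α : Type*} (T : List α) (fs : List (List α)) : Prop :=
  fs.flatten = T ∧ ∀ (k : ℕ) (hk : k < fs.length),
    fs.get ⟨k, hk⟩ ≠ [] ∧
    (∀ ℓ : ℕ, ℓ ≤ T.length - ((fs.take k).flatten).length →
      (∃ m < k, (T.drop ((fs.take k).flatten).length).take ℓ <:+ (fs.take m).flatten) →
      ℓ ≤ (fs.get ⟨k, hk⟩).length) ∧
    ((fs.get ⟨k, hk⟩).length = 1 ∨
      ∃ m < k, fs.get ⟨k, hk⟩ <:+ (fs.take m).flatten)

/-- Characters: `a i`, `b i`, `x`, `#_j`, pairwise distinct. -/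
def chA (i : ℕ) : ℕ := 4 * i
def chB (i : ℕ) : ℕ := 4 * i + 1
def chX : ℕ := 1
def chHash (j : ℕ) : ℕ := 4 * j + 3

/-- `A(i) = a_1⋯a_i`. -/
def strA (i : ℕ) : List ℕ := (List.range i).map fun t => chA (t + 1)
/-- `B(i) = b_i⋯b_1`. -/
def strB (i : ℕ) : List ℕ := ((List.range i).map fun t => chB (t + 1)).reverse

/-- `Pair(p)`: all pairs `(l, r) ∈ [1,p]²` ordered by increasing `l + r`, then by
increasing `l`. -/
def pairList (p : ℕ) : List (ℕ × ℕ) :=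
  ((List.range' 2 (2 * p - 1)).map fun k =>
    (List.range' (max 1 (k - p)) (min p (k - 1) + 1 - max 1 (k - p))).map
      fun l => (l, k - l)).flatten

/-- `T = B(p)·x·A(p)·∏_{i=1}^{p²} (#_i · B(l_i) · x · A(r_i))`. -/
def TEnd (p : ℕ) : List ℕ :=
  strB p ++ [chX] ++ strA p ++
  (((pairList p).zipIdx).map fun q =>
    chHash (q.2 + 1) :: (strB q.1.1 ++ [chX] ++ strA q.1.2)).flatten

/-!
A greedy LZ-End factorization is unique: each phrase length is forced to be the largest length
admissible after the phrases chosen so far (or 1 if none is), so it suffices to exhibit one greedy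
factorization with `2p² + 2p + 1` phrases. Take every letter of `B(p)·x·A(p)` as its own phrase,
then for each `i` the two phrases `#_i` and `B(l_i)·x·A(r_i)`. Greediness is certified by fresh
letters: no admissible phrase reaches past a letter that does not occur before the phrase starts
(a letter of `B(p)·x·A(p)` or `#_i` at its first occurrence, or the `#_{i+1}` after a block),
while `B(l)·x·A(r)` is a suffix of `B(p)·x·A(r)`, a prefix of `T` ending at a phrase boundary.
Since `(l_i, r_i)` enumerates `[1,p]²` without repetition, there are `p²` blocks.
-/

namespace List

variable {α β : Type*}

theorem le_of_take_subset_of_forall_notMem {w s : List α} {ℓ u : ℕ} (hℓ : ℓ ≤ w.length)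
    (hsub : w.take ℓ ⊆ s) (hu : ∀ c ∈ w[u]?, c ∉ s) : ℓ ≤ u := by
  by_contra! h
  have hw : u < w.length := by omega
  exact hu w[u] (by simp [hw]) (hsub (mem_iff_getElem.mpr ⟨u, by simp; omega, by simp⟩))

theorem append_cons_eq_append_iff {pre post A B : List α} {f : α} :
    pre ++ f :: post = A ++ B ↔
      (∃ A₂, A = pre ++ f :: A₂ ∧ post = A₂ ++ B) ∨ ∃ B₁, B = B₁ ++ f :: post ∧ pre = A ++ B₁ := by
  rw [append_eq_append_iff]
  constructor
  · rintro (⟨_ | ⟨g, A₂⟩, rfl, h⟩ | ⟨B₁, rfl, rfl⟩)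
    · exact .inr ⟨[], by simpa using h.symm, by simp⟩
    · obtain ⟨rfl, rfl⟩ := cons_eq_cons.mp h
      exact .inl ⟨A₂, rfl, rfl⟩
    · exact .inr ⟨B₁, rfl, rfl⟩
  · rintro (⟨A₂, rfl, rfl⟩ | ⟨B₁, rfl, rfl⟩)
    · exact .inl ⟨f :: A₂, rfl, rfl⟩
    · exact .inr ⟨B₁, rfl, rfl⟩

theorem exists_of_append_cons_eq_flatMap {g : β → List α} {L : List β} {pre post : List α}
    {f : α} (h : pre ++ f :: post = L.flatMap g) :
    ∃ L₁ q L₂ g₁ g₂, L = L₁ ++ q :: L₂ ∧ g q = g₁ ++ f :: g₂ ∧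
      pre = L₁.flatMap g ++ g₁ ∧ post = g₂ ++ L₂.flatMap g := by
  induction L generalizing pre with
  | nil => simp at h
  | cons q L ih =>
    rcases append_cons_eq_append_iff.mp (h.trans flatMap_cons) with ⟨A₂, hq, rfl⟩ | ⟨B₁, hL, rfl⟩
    · exact ⟨[], q, L, pre, A₂, rfl, hq, by simp, rfl⟩
    · obtain ⟨L₁, q', L₂, g₁, g₂, rfl, hq', rfl, rfl⟩ := ih hL.symm
      exact ⟨q :: L₁, q', L₂, g₁, g₂, rfl, hq', by simp, rfl⟩

theorem drop_length_flatten_take {fs : List (List α)} {k : ℕ} (hk : k < fs.length) :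
    fs.flatten.drop (fs.take k).flatten.length = fs[k] ++ (fs.drop (k + 1)).flatten := by
  have hsplit : fs = fs.take k ++ fs[k] :: fs.drop (k + 1) := by
    rw [← drop_eq_getElem_cons, take_append_drop]
  have hflat : fs.flatten = (fs.take k).flatten ++ (fs[k] ++ (fs.drop (k + 1)).flatten) := by
    rw [← flatten_cons, ← flatten_append, ← hsplit]
  rw [hflat, drop_left]

end List

section LZEnd

variable {α : Type*}

open List

-- The letter at offset `u` of the remaining text does not occur before the phrase, so no
-- source can reach past it.
theorem isGreedyLZEnd_flatten_of_forall_split {fs : List (List α)}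
    (h : ∀ pre f post, fs = pre ++ f :: post →
      f ≠ [] ∧ (f.length = 1 ∨ ∃ m < pre.length, f <:+ (pre.take m).flatten) ∧
        ∃ u ≤ f.length, ∀ c ∈ (f ++ post.flatten)[u]?, c ∉ pre.flatten) :
    IsGreedyLZEnd fs.flatten fs := by
  refine ⟨rfl, fun k hk => ?_⟩
  have hsplit : fs = fs.take k ++ fs[k] :: fs.drop (k + 1) := by
    rw [← drop_eq_getElem_cons, take_append_drop]
  have htake : ∀ m ≤ k, (fs.take k).take m = fs.take m := fun m hm => by
    rw [take_take, min_eq_left hm]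
  have hrest := drop_length_flatten_take hk
  have hlen : (fs.take k).length = k := by simp; omega
  obtain ⟨hne, hsrc, u, hu, hfresh⟩ := h _ _ _ hsplit
  simp only [get_eq_getElem, hlen] at hsrc ⊢
  refine ⟨hne, fun ℓ hℓ ⟨m, hm, hsuf⟩ => ?_, ?_⟩
  · refine le_trans (le_of_take_subset_of_forall_notMem (w := fs[k] ++ (fs.drop (k + 1)).flatten)
      (by simpa [← hrest] using hℓ) ?_ hfresh) hu
    rw [← hrest]
    exact List.Subset.trans hsuf.subset (htake m hm.le ▸ (take_prefix m _).flatten.subset)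
  · exact hsrc.imp_right fun ⟨m, hm, hs⟩ => ⟨m, hm, htake m hm.le ▸ hs⟩

def IsGreedyLength (P : ℕ → Prop) (N L : ℕ) : Prop :=
  1 ≤ L ∧ L ≤ N ∧ (L = 1 ∨ P L) ∧ ∀ ℓ ≤ N, P ℓ → ℓ ≤ L

theorem IsGreedyLength.unique {P : ℕ → Prop} {N L₁ L₂ : ℕ} (h₁ : IsGreedyLength P N L₁)
    (h₂ : IsGreedyLength P N L₂) : L₁ = L₂ := by
  obtain ⟨hpos₁, hle₁, hP₁ | hP₁, hmax₁⟩ := h₁ <;> obtain ⟨hpos₂, hle₂, hP₂ | hP₂, hmax₂⟩ := h₂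
  · omega
  · have := hmax₁ _ hle₂ hP₂; omega
  · have := hmax₂ _ hle₁ hP₁; omega
  · exact le_antisymm (hmax₂ _ hle₁ hP₁) (hmax₁ _ hle₂ hP₂)

def HasLZEndSource (T : List α) (pre : List (List α)) (ℓ : ℕ) : Prop :=
  ∃ m < pre.length, (T.drop pre.flatten.length).take ℓ <:+ (pre.take m).flatten

theorem IsGreedyLZEnd.isGreedyLength {T : List α} {fs : List (List α)} (h : IsGreedyLZEnd T fs)
    {k : ℕ} (hk : k < fs.length) :
    IsGreedyLength (HasLZEndSource T (fs.take k)) (T.length - (fs.take k).flatten.length)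
      fs[k].length := by
  obtain ⟨rfl, h⟩ := h
  obtain ⟨hne, hmax, hsrc⟩ := h k hk
  have hrest := drop_length_flatten_take hk
  have hlen : (fs.take k).length = k := by simp; omega
  have htake : ∀ m ≤ k, (fs.take k).take m = fs.take m := fun m hm => by
    rw [take_take, min_eq_left hm]
  have hsource : ∀ ℓ, HasLZEndSource fs.flatten (fs.take k) ℓ ↔
      ∃ m < k, (fs.flatten.drop (fs.take k).flatten.length).take ℓ <:+ (fs.take m).flatten :=
    fun ℓ => by
      rw [HasLZEndSource, hlen]
      exact exists_congr fun m => and_congr_right fun hm => by rw [htake m hm.le]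
  simp only [get_eq_getElem] at hne hmax hsrc
  refine ⟨length_pos_iff.mpr hne, ?_, ?_, fun ℓ hℓ hP => hmax ℓ hℓ ((hsource ℓ).mp hP)⟩
  · rw [← length_drop, hrest, length_append]
    omega
  · refine hsrc.imp_right fun hP => (hsource _).mpr ?_
    rwa [hrest, take_left]

theorem IsGreedyLZEnd.getElem_eq_take {T : List α} {fs : List (List α)} (h : IsGreedyLZEnd T fs)
    {k : ℕ} (hk : k < fs.length) :
    fs[k] = (T.drop (fs.take k).flatten.length).take fs[k].length := by
  rw [← h.1, drop_length_flatten_take hk, take_left]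

theorem IsGreedyLZEnd.lt_length_of_take_eq {T : List α} {fs gs : List (List α)}
    (hf : IsGreedyLZEnd T fs) (hg : IsGreedyLZEnd T gs) {k : ℕ} (htake : fs.take k = gs.take k)
    (hk : k < fs.length) : k < gs.length := by
  by_contra! hle
  have hend : (fs.take k).flatten.length = fs.flatten.length := by
    rw [htake, take_of_length_le hle, hg.1, hf.1]
  have hrest := drop_length_flatten_take hk
  rw [hend, drop_length, eq_comm, append_eq_nil_iff] at hrest
  simpa using (hf.2 k hk).1 hrest.1

theorem IsGreedyLZEnd.take_eq {T : List α} {fs gs : List (List α)} (hf : IsGreedyLZEnd T fs)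
    (hg : IsGreedyLZEnd T gs) (k : ℕ) : fs.take k = gs.take k := by
  induction k with
  | zero => simp
  | succ k ih =>
    by_cases hk : k < fs.length
    · have hk' := hf.lt_length_of_take_eq hg ih hk
      have hgreedy := hg.isGreedyLength hk'
      rw [← ih] at hgreedy
      have hlen := (hf.isGreedyLength hk).unique hgreedy
      have hget : fs[k] = gs[k] := by
        rw [hf.getElem_eq_take hk, hg.getElem_eq_take hk', ih, hlen]
      rw [take_succ_eq_append_getElem hk, take_succ_eq_append_getElem hk', ih, hget]
    · have hk' : ¬k < gs.length := fun h => hk (hg.lt_length_of_take_eq hf ih.symm h)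
      rw [take_of_length_le (by omega), take_of_length_le (by omega)]
      rwa [take_of_length_le (by omega), take_of_length_le (by omega)] at ih

theorem IsGreedyLZEnd.unique {T : List α} {fs gs : List (List α)} (hf : IsGreedyLZEnd T fs)
    (hg : IsGreedyLZEnd T gs) : fs = gs := by
  have h := hf.take_eq hg (max fs.length gs.length)
  rwa [take_of_length_le (le_max_left _ _), take_of_length_le (le_max_right _ _)] at h

end LZEnd

section Separated

variable {α : Type*}

open List

def separatedFactorization (base : List α) (blocks : List (α × List α)) : List (List α) :=
  base.map (fun c => [c]) ++ blocks.flatMap fun q => [[q.1], q.2]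

theorem flatten_separatedFactorization (base : List α) (blocks : List (α × List α)) :
    (separatedFactorization base blocks).flatten = base ++ blocks.flatMap fun q => q.1 :: q.2 := by
  rw [separatedFactorization, flatten_append, ← flatMap_def, flatMap_singleton']
  congr 1
  induction blocks <;> simp [*]

theorem length_separatedFactorization (base : List α) (blocks : List (α × List α)) :
    (separatedFactorization base blocks).length = base.length + 2 * blocks.length := by
  simp [separatedFactorization, mul_comm]

theorem fst_notMem_base_append_flatMap {base : List α} {L₁ L₂ : List (α × List α)}
    (hnodup : (base ++ (L₁ ++ L₂).map Prod.fst).Nodup) (hbody : ∀ q ∈ L₁, q.2 ⊆ base)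
    {q : α × List α} (hq : q ∈ L₂) : q.1 ∉ base ++ L₁.flatMap fun q => q.1 :: q.2 := by
  simp only [map_append, nodup_append, mem_append, mem_map] at hnodup
  obtain ⟨-, ⟨-, -, hsep⟩, hbase⟩ := hnodup
  simp only [mem_append, mem_flatMap, mem_cons, not_or, not_exists, not_and]
  refine ⟨fun h => hbase _ h _ (.inr ⟨q, hq, rfl⟩) rfl, fun q' hq' => ⟨fun h => ?_, fun h => ?_⟩⟩
  · exact hsep _ ⟨q', hq', rfl⟩ _ ⟨q, hq, rfl⟩ h.symm
  · exact hbase _ (hbody q' hq' h) _ (.inr ⟨q, hq, rfl⟩) rfl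

theorem isGreedyLZEnd_separatedFactorization {base : List α} {blocks : List (α × List α)}
    (hnodup : (base ++ blocks.map Prod.fst).Nodup)
    (hbody : ∀ q ∈ blocks, q.2 ≠ [] ∧ ∃ m ≤ base.length, q.2 <:+ base.take m) :
    IsGreedyLZEnd (base ++ blocks.flatMap fun q => q.1 :: q.2)
      (separatedFactorization base blocks) := by
  have hsub : ∀ q ∈ blocks, q.2 ⊆ base := fun q hq =>
    have ⟨_, _, _, hsuf⟩ := hbody q hq
    List.Subset.trans hsuf.subset (take_subset _ _)
  have hpre (L : List (α × List α)) :
      (base.map (fun c => [c]) ++ L.flatMap fun q => [[q.1], q.2]).flatten =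
        base ++ L.flatMap fun q => q.1 :: q.2 :=
    flatten_separatedFactorization base L
  rw [← flatten_separatedFactorization]
  refine isGreedyLZEnd_flatten_of_forall_split fun pre f post hsplit => ?_
  rcases append_cons_eq_append_iff.mp hsplit.symm with ⟨A₂, hA, rfl⟩ | ⟨B₁, hB, rfl⟩
  · obtain ⟨b₁, _, rfl, rfl, hb₂⟩ := map_eq_append_iff.mp hA
    obtain ⟨c, b₂, rfl, rfl, -⟩ := map_eq_cons_iff.mp hb₂
    have hc := (nodup_middle.mp (nodup_append.mp hnodup).1).notMem
    refine ⟨by simp, .inl rfl, 0, by simp, ?_⟩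
    simpa using fun h => hc (mem_append_left _ h)
  · obtain ⟨L₁, q, L₂, g₁, g₂, rfl, hq, rfl, rfl⟩ := exists_of_append_cons_eq_flatMap hB.symm
    rcases g₁ with _ | ⟨a, _ | ⟨b, g₁⟩⟩ <;>
      simp only [cons_append, nil_append, cons.injEq, nil_eq, append_eq_nil_iff, reduceCtorEq,
        and_false] at hq
    · obtain ⟨rfl, rfl⟩ := hq
      refine ⟨by simp, .inl rfl, 0, by simp, ?_⟩
      rw [append_nil, hpre]
      simpa using fst_notMem_base_append_flatMap hnodup
        (fun q' hq' => hsub q' (mem_append_left _ hq')) mem_cons_self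
    · obtain ⟨rfl, rfl, rfl⟩ := hq
      obtain ⟨hne, m, hm, hsuf⟩ := hbody q (mem_append_right _ mem_cons_self)
      refine ⟨hne, .inr ⟨m, by simp; omega, ?_⟩, q.2.length, le_rfl, ?_⟩
      · rw [take_append_of_le_length (by simpa), ← map_take, ← flatMap_def, flatMap_singleton']
        exact hsuf
      · rw [getElem?_append_right le_rfl, Nat.sub_self]
        rcases L₂ with _ | ⟨q', L₂⟩
        · simp
        · rw [show L₁ ++ q :: q' :: L₂ = (L₁ ++ [q]) ++ q' :: L₂ by simp] at hnodup hsub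
          have := fst_notMem_base_append_flatMap hnodup
            (fun q'' hq'' => hsub q'' (mem_append_left _ hq'')) mem_cons_self
          intro c hc hmem
          obtain rfl : q'.1 = c := by simpa using hc
          refine this (subset_def.mp ?_ hmem)
          rw [← append_assoc, flatten_append, hpre, flatMap_append, ← append_assoc]
          exact ((prefix_append_right_inj _).mpr (by simp)).subset

end Separated

section PairList

open List

theorem mem_pairList {p l r : ℕ} : (l, r) ∈ pairList p ↔ 1 ≤ l ∧ l ≤ p ∧ 1 ≤ r ∧ r ≤ p := by
  simp only [pairList, mem_flatten, mem_map, mem_range'_1, exists_exists_and_eq_and, sup_le_iff,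
    tsub_le_iff_right, Prod.mk.injEq, existsAndEq, true_and]
  constructor
  · rintro ⟨k, hk, hl, rfl⟩
    omega
  · intro h
    exact ⟨l + r, by omega⟩

theorem nodup_pairList (p : ℕ) : (pairList p).Nodup := by
  rw [pairList, nodup_flatten, pairwise_map]
  refine ⟨?_, (pairwise_lt_range' (s := 2) (n := 2 * p - 1)).imp fun hlt => ?_⟩
  · simp only [mem_map, forall_exists_index, and_imp, forall_apply_eq_imp_iff₂]
    intro k _
    exact (nodup_range' ..).map fun a b h => by simp only [Prod.mk.injEq] at h; exact h.1
  · simp only [List.Disjoint, mem_map, mem_range'_1]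
    rintro _ ⟨a, ha, rfl⟩ ⟨b, hb, hab⟩
    simp only [Prod.mk.injEq] at hab
    omega

theorem length_pairList (p : ℕ) : (pairList p).length = p * p := by
  classical
  have hset : (pairList p).toFinset = Finset.Icc 1 p ×ˢ Finset.Icc 1 p := by
    ext ⟨l, r⟩
    simp only [mem_toFinset, mem_pairList, Finset.mem_product, Finset.mem_Icc, and_assoc]
  rw [← toFinset_card_of_nodup (nodup_pairList p), hset, Finset.card_product, Nat.card_Icc,
    Nat.add_sub_cancel]

end PairList

section TEnd

open List

def TEndBlocks (p : ℕ) : List (ℕ × List ℕ) :=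
  (pairList p).zipIdx.map fun q => (chHash (q.2 + 1), strB q.1.1 ++ [chX] ++ strA q.1.2)

theorem TEnd_eq (p : ℕ) :
    TEnd p = strB p ++ [chX] ++ strA p ++ (TEndBlocks p).flatMap fun q => q.1 :: q.2 := by
  simp [TEnd, TEndBlocks, flatMap_def, Function.comp_def]

theorem mem_strA {c i : ℕ} : c ∈ strA i ↔ ∃ t < i, c = 4 * (t + 1) := by
  simp [strA, chA, eq_comm]

theorem mem_strB {c i : ℕ} : c ∈ strB i ↔ ∃ t < i, c = 4 * (t + 1) + 1 := by
  simp [strB, chB, eq_comm]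

@[simp] theorem length_strA (i : ℕ) : (strA i).length = i := by simp [strA]

@[simp] theorem length_strB (i : ℕ) : (strB i).length = i := by simp [strB]

theorem nodup_strA (i : ℕ) : (strA i).Nodup :=
  nodup_range.map fun a b h => by simp only [chA] at h; omega

theorem nodup_strB (i : ℕ) : (strB i).Nodup :=
  nodup_reverse.mpr (nodup_range.map fun a b h => by simp only [chB] at h; omega)

theorem map_fst_TEndBlocks (p : ℕ) :
    (TEndBlocks p).map Prod.fst = (range (pairList p).length).map fun j => chHash (j + 1) := by
  rw [TEndBlocks, map_map, range_eq_range', ← zipIdx_map_snd, map_map]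
  rfl

theorem nodup_TEnd_separators (p : ℕ) :
    (strB p ++ [chX] ++ strA p ++ (TEndBlocks p).map Prod.fst).Nodup := by
  rw [map_fst_TEndBlocks]
  simp only [nodup_append, mem_append, mem_strA, mem_strB, mem_singleton, mem_map, mem_range, chX,
    chHash]
  refine ⟨⟨⟨nodup_strB p, nodup_singleton _, ?_⟩, nodup_strA p, ?_⟩,
    nodup_range.map fun a b h => by omega, ?_⟩ <;> grind

theorem take_strA {r i : ℕ} (h : r ≤ i) : (strA i).take r = strA r := by
  rw [strA, ← map_take, take_range, min_eq_left h, strA]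

theorem strB_suffix_strB {l i : ℕ} (h : l ≤ i) : strB l <:+ strB i := by
  rw [strB, strB, reverse_suffix, ← min_eq_left h, ← take_range, map_take]
  exact take_prefix _ _

theorem block_suffix_take {p l r : ℕ} (hl : l ≤ p) (hr : r ≤ p) :
    strB l ++ [chX] ++ strA r <:+ (strB p ++ [chX] ++ strA p).take (p + 1 + r) := by
  have hlen : (strB p ++ [chX]).length = p + 1 := by simp
  rw [take_append, hlen, take_of_length_le (by omega), Nat.add_sub_cancel_left, take_strA hr]
  exact suffix_append_self_iff.mpr (suffix_append_self_iff.mpr (strB_suffix_strB hl))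

def TEndFactorization (p : ℕ) : List (List ℕ) :=
  separatedFactorization (strB p ++ [chX] ++ strA p) (TEndBlocks p)

theorem isGreedyLZEnd_TEndFactorization (p : ℕ) : IsGreedyLZEnd (TEnd p) (TEndFactorization p) := by
  rw [TEnd_eq]
  refine isGreedyLZEnd_separatedFactorization (nodup_TEnd_separators p) fun q hq => ?_
  obtain ⟨⟨⟨l, r⟩, j⟩, hlr, rfl⟩ := mem_map.mp hq
  obtain ⟨-, hl, -, hr⟩ : 1 ≤ l ∧ l ≤ p ∧ 1 ≤ r ∧ r ≤ p :=
    mem_pairList.mp (fst_mem_of_mem_zipIdx hlr)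
  exact ⟨by simp, p + 1 + r, by simp; omega, block_suffix_take hl hr⟩

theorem length_TEndFactorization (p : ℕ) :
    (TEndFactorization p).length = 2 * p ^ 2 + 2 * p + 1 := by
  rw [TEndFactorization, length_separatedFactorization]
  simp only [length_append, length_strB, length_singleton, length_strA, TEndBlocks, length_map,
    length_zipIdx, length_pairList]
  ring

end TEnd

theorem stmt16_general (p : ℕ) :
    (∃ fs, IsGreedyLZEnd (TEnd p) fs) ∧
    (∀ fs, IsGreedyLZEnd (TEnd p) fs → fs.length = 2 * p ^ 2 + 2 * p + 1) :=
  ⟨⟨_, isGreedyLZEnd_TEndFactorization p⟩, fun fs hfs => by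
    rw [hfs.unique (isGreedyLZEnd_TEndFactorization p), length_TEndFactorization]⟩

/-- The greedy LZ-End factorization of `T` has exactly `2p² + 2p + 1` phrases. -/
theorem stmt16 (p : ℕ) (hp : 2 ≤ p) :
    (∃ fs, IsGreedyLZEnd (TEnd p) fs) ∧
    (∀ fs, IsGreedyLZEnd (TEnd p) fs → fs.length = 2 * p ^ 2 + 2 * p + 1) :=
  stmt16_general p
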